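/- Let K be a commutative ring, A, B two n×n matrices over K, and 0 ≤ k ≤ n. Then Σ_{P ∈ P_n} Σ_{Q ∈ Q_n} [Q·P·A·P^{-1}·Q + B]^{(k)} = 2^n · Σ_{i=0}^{k} ((n−i)!·(n−k+i)!/(n−k)!) · [A]^{(i)} · [B]^{(k−i)}, where the integer coefficients are interpreted via the canonical map from the natural numbers to K. -/

import Mathlib

/-- `[A]^(k)`: the sum of all principal `k × k` minors of `A`. -/
noncomputable def principalMinorSum {K : Type*} [CommRing K] {n : ℕ}
    (A : Matrix (Fin n) (Fin n) K) (k : ℕ) : K :=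
  ∑ S : {s : Finset (Fin n) // s.card = k},
    (A.submatrix (S.1.orderEmbOfFin S.2) (S.1.orderEmbOfFin S.2)).det

/-- The sign (diagonal `±1`) matrix determined by `ε : Fin n → Bool`. -/
def signMatrix (K : Type*) [CommRing K] {n : ℕ} (ε : Fin n → Bool) :
    Matrix (Fin n) (Fin n) K :=
  Matrix.diagonal (fun i => if ε i then 1 else -1)


/-!
Averaging over the sign patterns `ε` kills every term of the Leibniz expansion of
`det (D_ε X D_ε + B)` on an index set `S` except those whose permutation maps the set `T` of
`X`-factors to itself (the character `∏_{T} ε_{π i} ε_i` averages to `[π T = T]`), and those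
terms reassemble into `[X]_T [B]_{S \ T}`. Summing over conjugation by permutations then
turns `[A]_T` into `|T|! (n - |T|)! [A]^(|T|)`, since exactly `|T|! (n - |T|)!` permutations
map `T` onto a given set of the same size. Finally, for fixed `U = S \ T` with `|U| = k - i`
there are `binom (n - k + i) i` choices of `T`.
-/

open Finset Matrix
open scoped Nat

theorem Finset.map_perm_eq_self_iff {α : Type*} (σ : Equiv.Perm α) (T : Finset α) :
    T.map σ.toEmbedding = T ↔ ∀ a, σ a ∈ T ↔ a ∈ T := by
  simp only [Finset.ext_iff, mem_map_equiv]
  exact ⟨fun h a => by simpa using (h (σ a)).symm, fun h b => by simpa using (h (σ.symm b)).symm⟩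

theorem Finset.map_subtype_compl {ι : Type*} [DecidableEq ι] (S : Finset ι) (T : Finset S) :
    Tᶜ.map (Function.Embedding.subtype (· ∈ S)) = S \ T.map (Function.Embedding.subtype _) := by
  ext x
  simp only [mem_map, mem_compl, Function.Embedding.coe_subtype, mem_sdiff]
  constructor
  · rintro ⟨y, hy, rfl⟩
    exact ⟨y.2, fun ⟨z, hz, hzy⟩ => hy (Subtype.ext hzy ▸ hz)⟩
  · rintro ⟨hx, hxT⟩
    exact ⟨⟨x, hx⟩, fun h => hxT ⟨_, h, rfl⟩, rfl⟩

section PermCounting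

variable {α : Type*} [DecidableEq α]

theorem Finset.exists_perm_map_eq {T V : Finset α} (h : #T = #V) :
    ∃ τ : Equiv.Perm α, T.map τ.toEmbedding = V := by
  obtain ⟨τ, hτ⟩ := (Set.powersetCard.isPretransitive (α := α) (n := #V)).exists_smul_eq
    ⟨T, h⟩ ⟨V, rfl⟩
  refine ⟨τ, ?_⟩
  simpa [Finset.map_eq_image, Finset.smul_finset_def, Equiv.Perm.smul_def] using
    congrArg Subtype.val hτ

variable [Fintype α]

theorem card_perm_map_eq_self (T : Finset α) :
    #{σ : Equiv.Perm α | T.map σ.toEmbedding = T} = (#T)! * (Fintype.card α - #T)! := by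
  have h := DomMulAct.stabilizer_card (fun a => decide (a ∈ T))
  simp only [Fintype.card_subtype, Fintype.prod_bool, decide_eq_true_eq,
    decide_eq_false_iff_not] at h
  rw [filter_mem_eq_inter, univ_inter, filter_not, filter_mem_eq_inter, univ_inter,
    card_univ_sdiff] at h
  rw [← h]
  congr 1
  ext σ
  simp [Finset.map_perm_eq_self_iff, funext_iff]

theorem card_perm_map_eq {T V : Finset α} (h : #T = #V) :
    #{σ : Equiv.Perm α | T.map σ.toEmbedding = V} = (#T)! * (Fintype.card α - #T)! := by
  obtain ⟨τ, hτ⟩ := Finset.exists_perm_map_eq h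
  rw [← card_perm_map_eq_self T]
  refine (card_equiv (Equiv.mulLeft τ) fun σ => ?_).symm
  simp only [mem_filter, mem_univ, true_and, Equiv.coe_mulLeft, Equiv.Perm.mul_def,
    Equiv.trans_toEmbedding, ← Finset.map_map, ← hτ]
  exact Finset.map_inj.symm

theorem sum_perm_map {M : Type*} [AddCommMonoid M] (f : Finset α → M) (T : Finset α) :
    ∑ σ : Equiv.Perm α, f (T.map σ.toEmbedding) =
      ((#T)! * (Fintype.card α - #T)!) • ∑ V ∈ powersetCard #T univ, f V := by
  rw [← sum_fiberwise_of_maps_to (g := fun σ : Equiv.Perm α => T.map σ.toEmbedding)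
    (t := powersetCard #T univ) fun σ _ => mem_powersetCard_univ.2 (card_map _), smul_sum]
  refine sum_congr rfl fun V hV => ?_
  rw [sum_congr rfl fun σ hσ => congrArg f (mem_filter.1 hσ).2, sum_const,
    card_perm_map_eq (mem_powersetCard_univ.1 hV).symm]

end PermCounting

section SubsetSums

variable {ι : Type*} [Fintype ι] [DecidableEq ι]

theorem sum_powersetCard_sum_powerset {M : Type*} [AddCommMonoid M]
    (F : Finset ι → Finset ι → M) (k : ℕ) :
    ∑ S ∈ powersetCard k univ, ∑ T ∈ S.powerset, F T (S \ T) =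
      ∑ i ∈ range (k + 1), ∑ U ∈ powersetCard (k - i) univ, ∑ T ∈ powersetCard i Uᶜ, F T U := by
  rw [sum_sigma', sum_sigma', sum_sigma']
  refine sum_nbij' (fun p => ⟨⟨#p.2, p.1 \ p.2⟩, p.2⟩) (fun q => ⟨q.2 ∪ q.1.2, q.2⟩)
    ?_ ?_ ?_ ?_ fun _ _ => rfl
  all_goals
    simp only [mem_sigma, mem_powersetCard, mem_powerset, mem_range, subset_univ,
      true_and, subset_compl_iff_disjoint_right]
    rintro ⟨S, T⟩ h
  · have := card_le_card h.2
    refine ⟨⟨by omega, by rw [card_sdiff_of_subset h.2]; omega⟩, disjoint_sdiff, trivial⟩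
  · refine ⟨?_, subset_union_left⟩
    rw [card_union_of_disjoint h.2.1]
    omega
  · simp [union_sdiff_of_subset h.2]
  · simp [h.2.2, union_sdiff_cancel_left h.2.1]

theorem sum_powersetCard_sum_powerset_card_mul {M : Type*} [CommSemiring M]
    (f : ℕ → M) (g : Finset ι → M) {k : ℕ} (hk : k ≤ Fintype.card ι) :
    ∑ S ∈ powersetCard k univ, ∑ T ∈ S.powerset, f #T * g (S \ T) =
      ∑ i ∈ range (k + 1),
        ((Fintype.card ι - k + i).choose i : M) * f i * ∑ U ∈ powersetCard (k - i) univ, g U := by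
  rw [sum_powersetCard_sum_powerset (fun T U => f #T * g U)]
  refine sum_congr rfl fun i hi => ?_
  rw [mul_sum]
  refine sum_congr rfl fun U hU => ?_
  have hcard : #Uᶜ = Fintype.card ι - k + i := by
    rw [card_compl, mem_powersetCard_univ.1 hU]
    have := mem_range.1 hi
    omega
  rw [sum_congr rfl fun T hT => by rw [(mem_powersetCard.1 hT).2], sum_const, card_powersetCard,
    hcard, nsmul_eq_mul, mul_assoc]

end SubsetSums

theorem Nat.add_factorial_div_factorial (m i : ℕ) : (m + i)! / m ! = (m + i).choose i * i ! := by
  have h := Nat.descFactorial_eq_div (Nat.le_add_left i m)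
  rw [Nat.add_sub_cancel, Nat.descFactorial_eq_factorial_mul_choose] at h
  rw [← h, mul_comm]

def boolSign (K : Type*) [Ring K] (b : Bool) : K := if b then 1 else -1

theorem sum_prod_boolSign_mul_prod_boolSign {K ι : Type*} [CommRing K] [Fintype ι]
    [DecidableEq ι] (A B : Finset ι) :
    ∑ ε : ι → Bool, (∏ j ∈ A, boolSign K (ε j)) * ∏ j ∈ B, boolSign K (ε j) =
      if A = B then 2 ^ Fintype.card ι else 0 := by
  have hprod : ∀ ε : ι → Bool, (∏ j ∈ A, boolSign K (ε j)) * ∏ j ∈ B, boolSign K (ε j) =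
      ∏ j, (if j ∈ A then boolSign K (ε j) else 1) * (if j ∈ B then boolSign K (ε j) else 1) := by
    intro ε
    rw [prod_mul_distrib, prod_ite_mem, prod_ite_mem, univ_inter, univ_inter]
  have hfactor : ∀ j, ∑ b : Bool, (if j ∈ A then boolSign K b else 1) *
      (if j ∈ B then boolSign K b else 1) = if (j ∈ A ↔ j ∈ B) then 2 else 0 := by
    intro j
    by_cases hA : j ∈ A <;> by_cases hB : j ∈ B <;> simp [hA, hB, boolSign, one_add_one_eq_two]
  simp_rw [hprod, ← Fintype.prod_sum (fun j b => (if j ∈ A then boolSign K b else 1) *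
      (if j ∈ B then boolSign K b else 1)), hfactor, Fintype.prod_ite_zero, prod_const, card_univ,
    ← Finset.ext_iff]

namespace Matrix

variable {K ι κ : Type*} [CommRing K] [DecidableEq ι] [DecidableEq κ]

noncomputable def principalMinor (A : Matrix ι ι K) (S : Finset ι) : K :=
  (A.submatrix ((↑) : S → ι) (↑)).det

theorem principalMinor_submatrix (A : Matrix ι ι K) (e : κ ↪ ι) (T : Finset κ) :
    principalMinor (A.submatrix e e) T = principalMinor A (T.map e) := by
  rw [principalMinor, principalMinor, ← det_submatrix_equiv_self (T.equivMap e)]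
  rfl

theorem principalMinorSum_eq_sum_principalMinor {n : ℕ} (A : Matrix (Fin n) (Fin n) K) (k : ℕ) :
    principalMinorSum A k = ∑ S ∈ powersetCard k univ, principalMinor A S := by
  rw [principalMinorSum, sum_subtype _ (fun _ => mem_powersetCard_univ)]
  refine Fintype.sum_congr _ _ fun S => ?_
  rw [principalMinor, ← det_submatrix_equiv_self (S.1.orderIsoOfFin S.2).toEquiv]
  rfl

theorem permMatrix_mul_mul_inv_permMatrix [Fintype ι] (σ : Equiv.Perm ι) (A : Matrix ι ι K) :
    σ.permMatrix K * A * (σ.permMatrix K)⁻¹ = A.submatrix σ σ := by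
  have hinv : (σ.permMatrix K)⁻¹ = σ⁻¹.permMatrix K :=
    inv_eq_right_inv (by rw [← permMatrix_mul, inv_mul_cancel, permMatrix_one])
  rw [hinv, PEquiv.toMatrix_toPEquiv_mul, PEquiv.mul_toMatrix_toPEquiv, submatrix_submatrix]
  rfl

theorem principalMinor_mul_principalMinor_compl [Fintype κ] (Y Z : Matrix κ κ K)
    (T : Finset κ) :
    principalMinor Y T * principalMinor Z Tᶜ =
      ∑ π : Equiv.Perm κ, if T.map π.toEmbedding = T then
        Equiv.Perm.sign π • ((∏ i ∈ T, Y (π i) i) * ∏ i ∈ Tᶜ, Z (π i) i) else 0 := by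
  set D : Matrix κ κ K := of fun i j =>
    if (i ∈ T ↔ j ∈ T) then (if j ∈ T then Y i j else Z i j) else 0
  have hprod : ∀ π : Equiv.Perm κ, ∏ i, D (π i) i =
      if T.map π.toEmbedding = T then (∏ i ∈ T, Y (π i) i) * ∏ i ∈ Tᶜ, Z (π i) i else 0 := by
    intro π
    split_ifs with h
    · rw [Finset.map_perm_eq_self_iff] at h
      rw [← prod_mul_prod_compl T]
      congr 1 <;> refine prod_congr rfl fun i hi => ?_ <;> simp_all [D]
    · obtain ⟨i, hi⟩ : ∃ i, ¬(π i ∈ T ↔ i ∈ T) := by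
        simpa [Finset.map_perm_eq_self_iff] using h
      exact prod_eq_zero (mem_univ i) (by simp [D, hi])
  have hY : D.toSquareBlockProp (· ∈ T) = Y.submatrix (↑) (↑) := by
    ext i j
    simp [D, toSquareBlockProp, toBlock, i.2, j.2]
  have hZ : (D.toSquareBlockProp (· ∉ T)).submatrix (Equiv.subtypeEquivRight fun _ => mem_compl)
      (Equiv.subtypeEquivRight fun _ => mem_compl) =
        Z.submatrix ((↑) : (Tᶜ : Finset κ) → κ) (↑) := by
    ext i j
    simp [D, toSquareBlockProp, toBlock, mem_compl.1 i.2, mem_compl.1 j.2]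
  have hblock : det D = principalMinor Y T * principalMinor Z Tᶜ := by
    rw [twoBlockTriangular_det D (· ∈ T) (fun i hi j hj => by simp [D, hi, hj]),
      principalMinor, principalMinor, ← det_submatrix_equiv_self (Equiv.subtypeEquivRight fun _ => mem_compl)
        (toSquareBlockProp D fun i => i ∉ T), hY, hZ]
    congr 1 <;> convert rfl
  rw [← hblock, det_apply]
  simp_rw [hprod, smul_ite, smul_zero]

theorem sum_det_diagonal_boolSign_conj_add [Fintype ι] [Fintype κ] (u : κ ↪ ι)
    (Y Z : Matrix κ κ K) :
    ∑ ε : ι → Bool, det (diagonal (fun i => boolSign K (ε (u i))) * Y *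
        diagonal (fun i => boolSign K (ε (u i))) + Z) =
      2 ^ Fintype.card ι * ∑ T : Finset κ, principalMinor Y T * principalMinor Z Tᶜ := by
  set C : Equiv.Perm κ → Finset κ → K := fun π T => (∏ i ∈ T, Y (π i) i) * ∏ i ∈ Tᶜ, Z (π i) i
  have hexpand : ∀ ε : ι → Bool, det (diagonal (fun i => boolSign K (ε (u i))) * Y *
        diagonal (fun i => boolSign K (ε (u i))) + Z) =
      ∑ π : Equiv.Perm κ, ∑ T : Finset κ, Equiv.Perm.sign π •
        (((∏ j ∈ (T.map π.toEmbedding).map u, boolSign K (ε j)) *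
          ∏ j ∈ T.map u, boolSign K (ε j)) * C π T) := by
    intro ε
    rw [det_apply]
    refine sum_congr rfl fun π _ => ?_
    simp only [add_apply, mul_diagonal, diagonal_mul, Fintype.prod_add, smul_sum, prod_map,
      prod_mul_distrib, C, Equiv.coe_toEmbedding]
    exact sum_congr rfl fun T _ => by congr 1; ring
  calc _ = ∑ π : Equiv.Perm κ, ∑ T : Finset κ, Equiv.Perm.sign π •
        ((if T.map π.toEmbedding = T then 2 ^ Fintype.card ι else 0) * C π T) := by
        simp_rw [hexpand]
        rw [sum_comm]
        refine sum_congr rfl fun π _ => ?_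
        rw [sum_comm]
        refine sum_congr rfl fun T _ => ?_
        rw [← smul_sum, ← sum_mul, sum_prod_boolSign_mul_prod_boolSign]
        simp only [Finset.map_inj]
    _ = _ := by
        rw [sum_comm, mul_sum]
        refine sum_congr rfl fun T _ => ?_
        rw [principalMinor_mul_principalMinor_compl, mul_sum]
        refine sum_congr rfl fun π _ => ?_
        split_ifs
        · rw [mul_smul_comm]
        · rw [zero_mul, smul_zero, mul_zero]

theorem sum_principalMinor_diagonal_boolSign_conj_add [Fintype ι] (X Y : Matrix ι ι K)
    (S : Finset ι) :
    ∑ ε : ι → Bool, principalMinor (diagonal (fun i => boolSign K (ε i)) * X *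
        diagonal (fun i => boolSign K (ε i)) + Y) S =
      2 ^ Fintype.card ι * ∑ T ∈ S.powerset, principalMinor X T * principalMinor Y (S \ T) := by
  let u := Function.Embedding.subtype (· ∈ S)
  have hsub : ∀ ε : ι → Bool, principalMinor (diagonal (fun i => boolSign K (ε i)) * X *
        diagonal (fun i => boolSign K (ε i)) + Y) S =
      det (diagonal (fun i => boolSign K (ε (u i))) * X.submatrix u u *
        diagonal (fun i => boolSign K (ε (u i))) + Y.submatrix u u) := by
    intro ε
    rw [principalMinor]
    congr 1
    ext i j
    simp [u, mul_diagonal, diagonal_mul]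
  simp_rw [hsub, sum_det_diagonal_boolSign_conj_add, principalMinor_submatrix]
  congr 1
  refine sum_nbij' (fun T => T.map u) (fun T => T.subtype (· ∈ S)) (fun T _ => ?_)
    (fun _ _ => mem_coe.2 (mem_univ _)) (fun T _ => ?_) (fun T hT => ?_)
    (fun T _ => by rw [Finset.map_subtype_compl])
  · simpa [subset_iff, u] using fun x hx _ => hx
  · ext x
    simp [u]
  · exact subtype_map_of_mem (mem_powerset.1 hT)

theorem sum_principalMinorSum_signMatrix_conj_add {n : ℕ} (X B : Matrix (Fin n) (Fin n) K)
    (k : ℕ) :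
    ∑ ε : Fin n → Bool, principalMinorSum (signMatrix K ε * X * signMatrix K ε + B) k =
      2 ^ n * ∑ S ∈ powersetCard k univ, ∑ T ∈ S.powerset,
        principalMinor X T * principalMinor B (S \ T) := by
  simp_rw [principalMinorSum_eq_sum_principalMinor]
  rw [sum_comm, mul_sum]
  refine sum_congr rfl fun S _ => ?_
  exact (sum_principalMinor_diagonal_boolSign_conj_add X B S).trans (by rw [Fintype.card_fin])

theorem sum_perm_principalMinor_submatrix {n : ℕ} (A : Matrix (Fin n) (Fin n) K)
    (T : Finset (Fin n)) :
    ∑ σ : Equiv.Perm (Fin n), principalMinor (A.submatrix σ σ) T =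
      ((#T)! * (n - #T)! : ℕ) * principalMinorSum A #T := by
  rw [sum_congr rfl fun σ _ => principalMinor_submatrix A σ.toEmbedding T, sum_perm_map,
    nsmul_eq_mul, Fintype.card_fin, principalMinorSum_eq_sum_principalMinor]

end Matrix

theorem sum_principalMinorSum_conj_add
    {K : Type*} [CommRing K] {n : ℕ}
    (A B : Matrix (Fin n) (Fin n) K) (k : ℕ) (hk : k ≤ n) :
    (∑ σ : Equiv.Perm (Fin n), ∑ ε : Fin n → Bool,
        principalMinorSum
          (signMatrix K ε * σ.permMatrix K * A * (σ.permMatrix K)⁻¹ * signMatrix K ε + B) k)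
      = (2 ^ n : ℕ) *
        ∑ i ∈ Finset.range (k + 1),
          ((n - i).factorial * ((n - k + i).factorial / (n - k).factorial) : ℕ) *
            principalMinorSum A i * principalMinorSum B (k - i) := by
  have hconj : ∀ (σ : Equiv.Perm (Fin n)) ε, signMatrix K ε * σ.permMatrix K * A *
      (σ.permMatrix K)⁻¹ * signMatrix K ε = signMatrix K ε * A.submatrix σ σ * signMatrix K ε := by
    intro σ ε
    rw [mul_assoc _ (σ.permMatrix K), mul_assoc _ (σ.permMatrix K * A),
      permMatrix_mul_mul_inv_permMatrix]
  let f : ℕ → K := fun t => ((t ! * (n - t)! : ℕ) : K) * principalMinorSum A t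
  calc _ = 2 ^ n * ∑ S ∈ powersetCard k univ, ∑ T ∈ S.powerset,
        f #T * principalMinor B (S \ T) := by
        simp_rw [hconj, sum_principalMinorSum_signMatrix_conj_add, ← mul_sum]
        rw [sum_comm]
        refine congrArg _ (sum_congr rfl fun S _ => ?_)
        rw [sum_comm]
        exact sum_congr rfl fun T _ => by rw [← sum_mul, sum_perm_principalMinor_submatrix]
    _ = 2 ^ n * ∑ i ∈ range (k + 1),
          ((n - k + i).choose i : K) * f i * principalMinorSum B (k - i) := by
        rw [sum_powersetCard_sum_powerset_card_mul f _ (by rwa [Fintype.card_fin])]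
        simp_rw [Fintype.card_fin, principalMinorSum_eq_sum_principalMinor]
    _ = _ := by
        simp_rw [Nat.add_factorial_div_factorial, f]
        push_cast
        exact congrArg _ (sum_congr rfl fun i _ => by ring)
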